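/- Let q₀,...,qₙ be positive integers with gcd(q₀,...,qₙ) = 1. In the quotient ring R = ℚ[x₀,...,xₙ]/(x₀⋯xₙ, q₁x₀ − q₀x₁, ..., qₙx₀ − q₀xₙ), one has R ≅ ℚ[t]/(t^{n+1}), via the map sending each xᵢ to (qᵢ/q₀)·t. -/

import Mathlib

/-!
Modulo the linear relations every `xᵢ` equals `(qᵢ/q₀)·x₀`, so the quotient is generated by
`x₀`, and the monomial `x₀⋯xₙ` becomes the nonzero multiple `(∏ qᵢ/q₀)·x₀^{n+1}`. Hence
`t ↦ x₀` and `xᵢ ↦ (qᵢ/q₀)·t` induce mutually inverse maps with `ℚ[t]/(t^{n+1})`.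
-/

open MvPolynomial in
/-- The defining ideal of the rational Chow ring of `ℙ(q₀,...,qₙ)`: the Stanley–Reisner
ideal `⟨x₀⋯xₙ⟩` plus the linear ideal `⟨qᵢx₀ - q₀xᵢ⟩`. -/
noncomputable def chowIdeal (n : ℕ) (q : Fin (n + 1) → ℕ) : Ideal (MvPolynomial (Fin (n + 1)) ℚ) :=
  Ideal.span ({∏ i, X i} ∪
    Set.range fun i : Fin n => C (q i.succ : ℚ) * X 0 - C (q 0 : ℚ) * X i.succ)

open MvPolynomial Ideal.Quotient

namespace WeightedChow

variable {K : Type*} [Field K] {n : ℕ} (a : Fin (n + 1) → K)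

noncomputable def ideal : Ideal (MvPolynomial (Fin (n + 1)) K) :=
  Ideal.span ({∏ i, X i} ∪ Set.range fun i : Fin n => C (a i.succ) * X 0 - C (a 0) * X i.succ)

lemma chowIdeal_eq (q : Fin (n + 1) → ℕ) : chowIdeal n q = ideal fun i => (q i : ℚ) := rfl

noncomputable def toLine : MvPolynomial (Fin (n + 1)) K →ₐ[K] Polynomial K :=
  aeval fun i => Polynomial.C (a i / a 0) * Polynomial.X

lemma toLine_X (i : Fin (n + 1)) : toLine a (X i) = Polynomial.C (a i / a 0) * Polynomial.X :=
  aeval_X _ _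

lemma ideal_le_comap_toLine :
    ideal a ≤ (Ideal.span {Polynomial.X ^ (n + 1)}).comap (toLine a) := by
  rw [ideal, Ideal.span_le]
  rintro _ (rfl | ⟨i, rfl⟩) <;> simp only [SetLike.mem_coe, Ideal.mem_comap]
  · have hprod : toLine a (∏ i, X i) =
        Polynomial.C (∏ i, a i / a 0) * Polynomial.X ^ (n + 1) := by
      simp only [map_prod, toLine_X, Finset.prod_mul_distrib, Finset.prod_const,
        Finset.card_univ, Fintype.card_fin]
    rw [hprod]
    exact Ideal.mul_mem_left _ _ (Ideal.subset_span rfl)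
  · convert Ideal.zero_mem _
    simp only [map_sub, map_mul, toLine_X, algHom_C, Polynomial.algebraMap_eq]
    rw [← mul_assoc, ← mul_assoc, ← Polynomial.C_mul, ← Polynomial.C_mul, mul_div_left_comm,
      sub_self]

variable {a}

lemma mk_X_eq (ha0 : a 0 ≠ 0) (i : Fin (n + 1)) :
    mk (ideal a) (X i) = mk (ideal a) (C (a i / a 0) * X 0) := by
  induction i using Fin.cases with
  | zero => rw [div_self ha0, C_1, one_mul]
  | succ j =>
    have hrel : mk (ideal a) (C (a j.succ) * X 0) = mk (ideal a) (C (a 0) * X j.succ) := by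
      rw [Ideal.Quotient.eq]
      exact Ideal.subset_span (Set.mem_union_right _ ⟨j, rfl⟩)
    calc mk (ideal a) (X j.succ)
        = mk (ideal a) (C (a 0)⁻¹ * (C (a 0) * X j.succ)) := by
          rw [← mul_assoc, ← C_mul, inv_mul_cancel₀ ha0, C_1, one_mul]
      _ = mk (ideal a) (C (a 0)⁻¹ * (C (a j.succ) * X 0)) := by
          rw [map_mul, map_mul (mk _) _ (C _ * _), hrel]
      _ = mk (ideal a) (C (a j.succ / a 0) * X 0) := by
          rw [← mul_assoc, ← C_mul, inv_mul_eq_div]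

lemma X_zero_pow_mem_ideal (ha : ∀ i, a i ≠ 0) : (X 0 : MvPolynomial _ K) ^ (n + 1) ∈ ideal a := by
  set c : K := ∏ i, a i / a 0
  have hc : c ≠ 0 := Finset.prod_ne_zero_iff.mpr fun i _ => div_ne_zero (ha i) (ha 0)
  have hprod : mk (ideal a) (∏ i, X i) = mk (ideal a) (C c * X 0 ^ (n + 1)) := by
    rw [map_prod, Finset.prod_congr rfl fun i _ => mk_X_eq (ha 0) i, ← map_prod,
      Finset.prod_mul_distrib, Finset.prod_const, Finset.card_univ, Fintype.card_fin, ← map_prod C]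
  have hzero : mk (ideal a) (C c * X 0 ^ (n + 1)) = 0 := by
    rw [← hprod, eq_zero_iff_mem]
    exact Ideal.subset_span (Set.mem_union_left _ rfl)
  rw [← eq_zero_iff_mem]
  calc mk (ideal a) (X 0 ^ (n + 1))
      = mk (ideal a) (C c⁻¹) * mk (ideal a) (C c * X 0 ^ (n + 1)) := by
        rw [← map_mul, ← mul_assoc, ← C_mul, inv_mul_cancel₀ hc, C_1, one_mul]
    _ = 0 := by rw [hzero, mul_zero]

lemma span_X_pow_le_comap_aeval (ha : ∀ i, a i ≠ 0) :
    Ideal.span {(Polynomial.X : Polynomial K) ^ (n + 1)} ≤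
      (ideal a).comap (Polynomial.aeval (X 0 : MvPolynomial (Fin (n + 1)) K)) := by
  rw [Ideal.span_le, Set.singleton_subset_iff, SetLike.mem_coe, Ideal.mem_comap, map_pow,
    Polynomial.aeval_X]
  exact X_zero_pow_mem_ideal ha

noncomputable def equivTruncated (ha : ∀ i, a i ≠ 0) :
    (MvPolynomial (Fin (n + 1)) K ⧸ ideal a) ≃ₐ[K]
      (Polynomial K ⧸ Ideal.span {(Polynomial.X : Polynomial K) ^ (n + 1)}) :=
  AlgEquiv.ofAlgHom (Ideal.quotientMapₐ _ (toLine a) (ideal_le_comap_toLine a))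
    (Ideal.quotientMapₐ _ (Polynomial.aeval (X 0)) (span_X_pow_le_comap_aeval ha))
    (by
      refine Ideal.Quotient.algHom_ext _ (Polynomial.algHom_ext ?_)
      simp [toLine_X, div_self (ha 0)])
    (by
      refine Ideal.Quotient.algHom_ext _ (MvPolynomial.algHom_ext fun i => ?_)
      simp only [AlgHom.comp_apply, mkₐ_eq_mk, Ideal.quotient_map_mkₐ, AlgHom.id_apply,
        toLine_X, map_mul, Polynomial.aeval_C, Polynomial.aeval_X, algebraMap_eq]
      exact (mk_X_eq (ha 0) i).symm)

lemma equivTruncated_mk_X (ha : ∀ i, a i ≠ 0) (i : Fin (n + 1)) :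
    equivTruncated ha (mk (ideal a) (X i)) = mk _ (Polynomial.C (a i / a 0) * Polynomial.X) := by
  simp [equivTruncated, toLine_X]

end WeightedChow

open MvPolynomial in
theorem chow_ring_iso_general (n : ℕ) (q : Fin (n + 1) → ℕ) (hq : ∀ i, 0 < q i) :
    ∃ f : (MvPolynomial (Fin (n + 1)) ℚ ⧸ chowIdeal n q) ≃+*
        (Polynomial ℚ ⧸ Ideal.span {(Polynomial.X : Polynomial ℚ) ^ (n + 1)}),
      ∀ i : Fin (n + 1),
        f (Ideal.Quotient.mk (chowIdeal n q) (X i)) =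
          Ideal.Quotient.mk _ (Polynomial.C ((q i : ℚ) / (q 0 : ℚ)) * Polynomial.X) := by
  have hq' : ∀ i, (q i : ℚ) ≠ 0 := fun i => Nat.cast_ne_zero.mpr (hq i).ne'
  rw [WeightedChow.chowIdeal_eq]
  exact ⟨(WeightedChow.equivTruncated hq').toRingEquiv, WeightedChow.equivTruncated_mk_X hq'⟩

open MvPolynomial in
/-- The rational Chow ring of `ℙ(q₀,...,qₙ)` is isomorphic to `ℚ[t]/(t^{n+1})`, via
`xᵢ ↦ (qᵢ/q₀)·t`. -/
theorem chow_ring_iso (n : ℕ) (q : Fin (n + 1) → ℕ) (hq : ∀ i, 0 < q i)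
    (hgcd : Finset.univ.gcd q = 1) :
    ∃ f : (MvPolynomial (Fin (n + 1)) ℚ ⧸ chowIdeal n q) ≃+*
        (Polynomial ℚ ⧸ Ideal.span {(Polynomial.X : Polynomial ℚ) ^ (n + 1)}),
      ∀ i : Fin (n + 1),
        f (Ideal.Quotient.mk (chowIdeal n q) (X i)) =
          Ideal.Quotient.mk _ (Polynomial.C ((q i : ℚ) / (q 0 : ℚ)) * Polynomial.X) :=
  chow_ring_iso_general n q hq
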